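/- Let f ∈ k[[x_1, ..., x_n]] be a reduced (square-free) homogeneous polynomial of degree d. Then for every m, the m-th jet support closure of (f) equals (f) + m^{m+1}. -/

import Mathlib

open Polynomial

/-- The truncated polynomial ring `A[t]/(t^(m+1))`. -/
abbrev JetTrunc (A : Type) [CommRing A] (m : ℕ) : Type :=
  Polynomial A ⧸ (Ideal.span {(X : Polynomial A) ^ (m + 1)} : Ideal (Polynomial A))

/-- The image of the variable `t` in `A[t]/(t^(m+1))`. -/
noncomputable def jetT (A : Type) [CommRing A] (m : ℕ) : JetTrunc A m :=
  Ideal.Quotient.mk _ (X : Polynomial A)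

/-- A test datum for the `m`-th jet closure of an ideal `I` of a local `k`-algebra `(R, 𝔪)`:
a `k`-algebra `A` together with a `k`-algebra map `φ : R → A[t]/(t^(m+1))` killing `I`
and sending the maximal ideal `𝔪` into `(t)` (i.e. an `A`-point of the scheme of local
`m`-jets of `Spec (R/I)` over the closed point). -/
structure JetTest (k : Type) [CommRing k] {R : Type} [CommRing R] [Algebra k R]
    (𝔪 : Ideal R) (m : ℕ) (I : Ideal R) where
  A : Type
  [instCommRing : CommRing A]
  [instAlgebra : Algebra k A]
  φ : R →ₐ[k] JetTrunc A m
  ker_I : ∀ f ∈ I, φ f = 0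
  max_to_t : ∀ f ∈ 𝔪, φ f ∈ Ideal.span {jetT A m}

attribute [instance] JetTest.instCommRing JetTest.instAlgebra

/-- The `m`-th jet closure `I^{m-jc}` of an ideal `I` in a local `k`-algebra `(R, 𝔪)`:
the intersection of the kernels of all jet test maps (functor-of-points description of the
kernel of `μ_m : R → R_m[t]/(t^(m+1), I_m, 𝔪^e)`). -/
noncomputable def jetClosure (k : Type) [CommRing k] {R : Type} [CommRing R] [Algebra k R]
    (𝔪 : Ideal R) (m : ℕ) (I : Ideal R) : Ideal R :=
  sInf { J : Ideal R | ∃ T : JetTest k 𝔪 m I, J = RingHom.ker T.φ }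

/-- A test datum for the `m`-th jet support closure: like a jet closure test,
but with the coefficient `k`-algebra `A` required to be reduced (functor-of-points
description of maps from `(R_m/(I_m + 𝔪^e))_red`). -/
structure JetSupportTest (k : Type) [CommRing k] {R : Type} [CommRing R] [Algebra k R]
    (𝔪 : Ideal R) (m : ℕ) (I : Ideal R) where
  A : Type
  [instCommRing : CommRing A]
  [instReduced : IsReduced A]
  [instAlgebra : Algebra k A]
  φ : R →ₐ[k] JetTrunc A m
  ker_I : ∀ f ∈ I, φ f = 0
  max_to_t : ∀ f ∈ 𝔪, φ f ∈ Ideal.span {jetT A m}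

attribute [instance] JetSupportTest.instCommRing JetSupportTest.instReduced
  JetSupportTest.instAlgebra

/-- The `m`-th jet support closure `I^{m-jsc}` of an ideal `I` in a local `k`-algebra
`(R, 𝔪)`. -/
noncomputable def jetSupportClosure (k : Type) [CommRing k] {R : Type} [CommRing R]
    [Algebra k R] (𝔪 : Ideal R) (m : ℕ) (I : Ideal R) : Ideal R :=
  sInf { J : Ideal R | ∃ T : JetSupportTest k 𝔪 m I, J = RingHom.ker T.φ }

/-- The maximal ideal `(x_1, ..., x_n)` of the formal power series ring `k[[x_1, ..., x_n]]`. -/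
noncomputable def mIdeal (k : Type) [Field k] (n : ℕ) : Ideal (MvPowerSeries (Fin n) k) :=
  RingHom.ker (MvPowerSeries.constantCoeff : MvPowerSeries (Fin n) k →+* k)

/-!
Every test map sends `𝔪` into `(t)`, and `t ^ (m + 1) = 0`, so every test kernel contains
`(f) + 𝔪 ^ (m + 1)`. Conversely, one test detects everything: take `A = k[x]/(f)`, reduced since
`f` is squarefree, and restrict to the line through the generic point `a = (x̄ᵢ)` of the cone
`f = 0`, i.e. `g ↦ g(a t) mod t ^ (m + 1)`. The coefficient of `tʲ` is the class of the
degree-`j` part of `g`; it vanishes on `(f)` because `(f)` is a homogeneous ideal, and its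
vanishing for all `j ≤ m` means exactly that `g ∈ (f) + 𝔪 ^ (m + 1)`.
-/

section JetSupportTest

variable {k R : Type} [CommRing k] [CommRing R] [Algebra k R] {𝔪 I : Ideal R} {m : ℕ}

theorem jetT_pow_succ (A : Type) [CommRing A] (m : ℕ) : jetT A m ^ (m + 1) = 0 := by
  rw [jetT, ← map_pow, Ideal.Quotient.eq_zero_iff_mem]
  exact Ideal.subset_span rfl

theorem JetSupportTest.sup_le_ker (T : JetSupportTest k 𝔪 m I) :
    I ⊔ 𝔪 ^ (m + 1) ≤ RingHom.ker T.φ := by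
  refine sup_le (fun g hg => T.ker_I g hg) ?_
  rw [RingHom.ker_eq_comap_bot, ← Ideal.map_le_iff_le_comap, Ideal.map_pow]
  calc Ideal.map T.φ 𝔪 ^ (m + 1) ≤ Ideal.span {jetT T.A m} ^ (m + 1) :=
        Ideal.pow_right_mono (Ideal.map_le_iff_le_comap.mpr T.max_to_t) _
    _ = ⊥ := by rw [Ideal.span_singleton_pow, jetT_pow_succ, Ideal.span_singleton_eq_bot]

theorem le_jetSupportClosure : I ⊔ 𝔪 ^ (m + 1) ≤ jetSupportClosure k 𝔪 m I :=
  le_sInf fun _ ⟨T, hT⟩ => hT ▸ T.sup_le_ker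

theorem jetSupportClosure_le_ker (T : JetSupportTest k 𝔪 m I) :
    jetSupportClosure k 𝔪 m I ≤ RingHom.ker T.φ :=
  sInf_le ⟨T, rfl⟩

end JetSupportTest

open MvPowerSeries in
/-- `k⟦x⟧` is the `(x)`-adic completion of `k[x]`, and the kernel of its projection to
`k[x]/(x) ^ N` is generated by `(x) ^ N`. -/
theorem MvPowerSeries.mem_ker_constantCoeff_pow {σ R : Type*} [Finite σ] [CommRing R] {N : ℕ}
    {g : MvPowerSeries σ R} (h : ∀ x : σ →₀ ℕ, x.degree < N → coeff x g = 0) :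
    g ∈ RingHom.ker (constantCoeff : MvPowerSeries σ R →+* R) ^ N := by
  set e := toAdicCompletionAlgEquiv σ R
  have htrunc : truncTotal N g = 0 := by
    ext x
    rw [coeff_truncTotal_eq_ite, MvPolynomial.coeff_zero]
    split_ifs with hx
    · exact h x hx
    · rfl
  have he :
      e g ∈ MvPolynomial.idealOfVars σ R ^ N • (⊤ : Submodule (MvPolynomial σ R) _) := by
    rw [AdicCompletion.pow_smul_top_eq_ker_eval (MvPolynomial.idealOfVars_fg σ R),
      LinearMap.mem_ker, AdicCompletion.eval_apply]
    simp [e, toAdicCompletion_apply_eq_mk_truncTotal, htrunc]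
  have hvars : Ideal.map (algebraMap (MvPolynomial σ R) (MvPowerSeries σ R))
      (MvPolynomial.idealOfVars σ R) ≤ RingHom.ker constantCoeff := by
    rw [MvPolynomial.idealOfVars, Ideal.map_span, Ideal.span_le]
    rintro _ ⟨_, ⟨i, rfl⟩, rfl⟩
    simp [MvPowerSeries.algebraMap_apply']
  rw [← e.symm_apply_apply g]
  refine Submodule.smul_induction_on he (fun r hr s _ => ?_) fun _ _ hx hy => ?_
  · rw [map_smul, Algebra.smul_def]
    refine Ideal.mul_mem_right _ _ (Ideal.pow_right_mono hvars N ?_)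
    rw [← Ideal.map_pow]
    exact Ideal.mem_map_of_mem _ hr
  · rw [map_add]
    exact add_mem hx hy

namespace MvPolynomial

variable {σ R A : Type*} [CommRing R] [CommRing A] [Algebra R A]

noncomputable def aevalLine (a : σ → A) : MvPolynomial σ R →ₐ[R] A[X] :=
  aeval fun i => Polynomial.C (a i) * Polynomial.X

theorem aevalLine_monomial (a : σ → A) (s : σ →₀ ℕ) (c : R) :
    aevalLine a (monomial s c) =
      Polynomial.C (aeval a (monomial s c)) * Polynomial.X ^ s.degree := by
  simp only [aevalLine, aeval_monomial, mul_pow, map_mul, Polynomial.algebraMap_apply, Finsupp.prod,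
    map_prod, map_pow, Finset.prod_mul_distrib, Finset.prod_pow_eq_pow_sum, Finsupp.degree_apply]
  ring

theorem coeff_aevalLine (a : σ → A) (p : MvPolynomial σ R) (j : ℕ) :
    (aevalLine a p).coeff j = aeval a (homogeneousComponent j p) := by
  induction p using MvPolynomial.induction_on' with
  | monomial s c =>
    rw [aevalLine_monomial, coeff_C_mul_X_pow,
      homogeneousComponent_of_mem (isHomogeneous_monomial c rfl)]
    split_ifs <;> simp
  | add p q hp hq => simp [hp, hq]

theorem idealOfVars_pow_le_comap_aevalLine (a : σ → A) (N : ℕ) :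
    idealOfVars σ R ^ N ≤ (Ideal.span {Polynomial.X ^ N}).comap (aevalLine a) := by
  rw [← Ideal.map_le_iff_le_comap, Ideal.map_pow, ← Ideal.span_singleton_pow]
  refine Ideal.pow_right_mono ?_ N
  rw [idealOfVars, Ideal.map_span, Ideal.span_le]
  rintro _ ⟨_, ⟨i, rfl⟩, rfl⟩
  exact Ideal.mem_span_singleton.mpr ⟨Polynomial.C (a i), by rw [aevalLine, aeval_X, mul_comm]⟩

theorem aeval_mk_X (J : Ideal (MvPolynomial σ R)) (p : MvPolynomial σ R) :
    aeval (fun i => Ideal.Quotient.mk J (X i)) p = Ideal.Quotient.mk J p := by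
  have : aeval (fun i => Ideal.Quotient.mk J (X i)) = Ideal.Quotient.mkₐ R J :=
    algHom_ext fun i => by simp
  rw [this, Ideal.Quotient.mkₐ_eq_mk]

end MvPolynomial

theorem JetTrunc.mk_eq_zero_iff {A : Type} [CommRing A] {m : ℕ} (q : A[X]) :
    (Ideal.Quotient.mk _ q : JetTrunc A m) = 0 ↔ ∀ j ≤ m, q.coeff j = 0 := by
  simp only [Ideal.Quotient.eq_zero_iff_mem, Ideal.mem_span_singleton, Polynomial.X_pow_dvd_iff,
    Nat.lt_succ_iff]

open MvPolynomial MvPowerSeries in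
/-- `g ↦ g(a t) mod t ^ (m + 1)`: the substitution is made sense of by first reducing `g`
modulo `(x) ^ (m + 1)`, which `x ↦ a t` sends into `(t ^ (m + 1))`. -/
noncomputable def jetAlongLine {σ R : Type*} [Finite σ] [CommRing R] {A : Type} [CommRing A]
    [Algebra R A] (a : σ → A) (m : ℕ) : MvPowerSeries σ R →ₐ[R] JetTrunc A m :=
  (Ideal.quotientMapₐ _ (aevalLine a) (idealOfVars_pow_le_comap_aevalLine a (m + 1))).comp
    ((truncTotalAlgHom σ R (m + 1)).restrictScalars R)

section JetAlongLine

open MvPolynomial MvPowerSeries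

variable {σ R : Type*} [Finite σ] [CommRing R] {A : Type} [CommRing A] [Algebra R A]
  (a : σ → A) (m : ℕ)

theorem jetAlongLine_apply (g : MvPowerSeries σ R) :
    jetAlongLine a m g = Ideal.Quotient.mk _ (aevalLine a (truncTotal (m + 1) g)) :=
  rfl

theorem jetAlongLine_coe (p : MvPolynomial σ R) :
    jetAlongLine a m (p : MvPowerSeries σ R) = Ideal.Quotient.mk _ (aevalLine a p) := by
  change Ideal.quotientMapₐ _ _ (idealOfVars_pow_le_comap_aevalLine a (m + 1))
    (truncTotalAlgHom σ R (m + 1) (algebraMap _ _ p)) = _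
  rw [AlgHom.commutes, Ideal.Quotient.algebraMap_eq, Ideal.quotient_map_mkₐ,
    Ideal.Quotient.mkₐ_eq_mk]

theorem jetAlongLine_mem_span_jetT {g : MvPowerSeries σ R} (hg : constantCoeff g = 0) :
    jetAlongLine a m g ∈ Ideal.span {jetT A m} := by
  have h0 : (aevalLine a (truncTotal (m + 1) g)).coeff 0 = 0 := by
    simp [coeff_aevalLine, homogeneousComponent_zero, coeff_truncTotal, hg]
  obtain ⟨q, hq⟩ := Polynomial.X_dvd_iff.mpr h0
  rw [jetAlongLine_apply, hq, map_mul]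
  exact Ideal.mul_mem_right _ _ (Ideal.subset_span rfl)

end JetAlongLine

attribute [local instance] MvPolynomial.gradedAlgebra

section GenericLine

open MvPolynomial MvPowerSeries

variable {σ R : Type} [Finite σ] [CommRing R] {J : Ideal (MvPolynomial σ R)} {m : ℕ}

theorem jetAlongLine_mk_X_eq_zero_iff (g : MvPowerSeries σ R) :
    jetAlongLine (fun i => Ideal.Quotient.mk J (X i)) m g = 0 ↔
      ∀ j ≤ m, homogeneousComponent j (truncTotal (m + 1) g) ∈ J := by
  rw [jetAlongLine_apply, JetTrunc.mk_eq_zero_iff]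
  simp only [coeff_aevalLine, aeval_mk_X, Ideal.Quotient.eq_zero_iff_mem]

theorem map_coe_le_ker_jetAlongLine_mk_X (hJ : J.IsHomogeneous (homogeneousSubmodule σ R)) :
    J.map coeToMvPowerSeries.ringHom ≤
      RingHom.ker (jetAlongLine (fun i => Ideal.Quotient.mk J (X i)) m) := by
  refine Ideal.map_le_iff_le_comap.mpr fun p hp => ?_
  rw [Ideal.mem_comap, RingHom.mem_ker, coeToMvPowerSeries.ringHom_apply, jetAlongLine_coe,
    JetTrunc.mk_eq_zero_iff]
  intro j _
  rw [coeff_aevalLine, aeval_mk_X, Ideal.Quotient.eq_zero_iff_mem]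
  exact homogeneousComponent_mem_of_mem hJ hp j

theorem ker_jetAlongLine_mk_X_le :
    RingHom.ker (jetAlongLine (fun i => Ideal.Quotient.mk J (X i)) m) ≤
      J.map coeToMvPowerSeries.ringHom ⊔
        RingHom.ker (MvPowerSeries.constantCoeff : MvPowerSeries σ R →+* R) ^ (m + 1) := by
  intro g hg
  set P := truncTotal (m + 1) g
  have hP : P ∈ J := by
    rw [← sum_homogeneousComponent P]
    refine Ideal.sum_mem _ fun j hj => (jetAlongLine_mk_X_eq_zero_iff g).mp hg j ?_
    have hdeg : P.totalDegree < m + 1 := totalDegree_truncTotal_lt g m.succ_ne_zero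
    simp only [Finset.mem_range] at hj
    omega
  have hrest : g - P ∈
      RingHom.ker (MvPowerSeries.constantCoeff : MvPowerSeries σ R →+* R) ^ (m + 1) := by
    refine mem_ker_constantCoeff_pow fun x hx => ?_
    rw [map_sub, MvPolynomial.coeff_coe, coeff_truncTotal _ hx, sub_self]
  rw [← add_sub_cancel (P : MvPowerSeries σ R) g]
  exact Ideal.add_mem _ (Ideal.mem_sup_left (Ideal.mem_map_of_mem _ hP)) (Ideal.mem_sup_right hrest)

end GenericLine

open MvPolynomial in
noncomputable def JetSupportTest.ofIsHomogeneous {k : Type} [Field k] {n : ℕ}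
    {J : Ideal (MvPolynomial (Fin n) k)} (hJ : J.IsHomogeneous (homogeneousSubmodule (Fin n) k))
    (hrad : J.IsRadical) (m : ℕ) :
    JetSupportTest k (mIdeal k n) m (J.map coeToMvPowerSeries.ringHom) where
  A := MvPolynomial (Fin n) k ⧸ J
  instReduced := (Ideal.isRadical_iff_quotient_reduced J).mp hrad
  φ := jetAlongLine (fun i => Ideal.Quotient.mk J (X i)) m
  ker_I _ hg := map_coe_le_ker_jetAlongLine_mk_X hJ hg
  max_to_t _ hg := jetAlongLine_mem_span_jetT _ m (RingHom.mem_ker.mp hg)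

open MvPolynomial in
theorem jetSupportClosure_map_coe_of_isHomogeneous {k : Type} [Field k] {n : ℕ}
    {J : Ideal (MvPolynomial (Fin n) k)} (hJ : J.IsHomogeneous (homogeneousSubmodule (Fin n) k))
    (hrad : J.IsRadical) (m : ℕ) :
    jetSupportClosure k (mIdeal k n) m (J.map coeToMvPowerSeries.ringHom) =
      J.map coeToMvPowerSeries.ringHom ⊔ mIdeal k n ^ (m + 1) := by
  refine le_antisymm ?_ le_jetSupportClosure
  rw [mIdeal]
  exact (jetSupportClosure_le_ker (.ofIsHomogeneous hJ hrad m)).trans ker_jetAlongLine_mk_X_le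

theorem jetSupportClosure_reduced_homogeneous_general (k : Type) [Field k] (n d : ℕ)
    (f : MvPolynomial (Fin n) k) (hf : f.IsHomogeneous d) (hred : Squarefree f) (m : ℕ) :
    jetSupportClosure k (mIdeal k n) m (Ideal.span {(f : MvPowerSeries (Fin n) k)}) =
      Ideal.span {(f : MvPowerSeries (Fin n) k)} ⊔ (mIdeal k n) ^ (m + 1) := by
  have hJ : (Ideal.span {f}).IsHomogeneous (MvPolynomial.homogeneousSubmodule (Fin n) k) :=
    Ideal.homogeneous_span _ _ fun p hp => ⟨d, (Set.mem_singleton_iff.mp hp) ▸ hf⟩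
  have hrad : (Ideal.span {f}).IsRadical := isRadical_iff_span_singleton.mp hred.isRadical
  have hmap : (Ideal.span {f}).map MvPolynomial.coeToMvPowerSeries.ringHom =
      Ideal.span {(f : MvPowerSeries (Fin n) k)} := by
    rw [Ideal.map_span, Set.image_singleton, MvPolynomial.coeToMvPowerSeries.ringHom_apply]
  rw [← hmap]
  exact jetSupportClosure_map_coe_of_isHomogeneous hJ hrad m

/-- for a reduced (square-free) homogeneous polynomial `f` of degree `d`,
the `m`-th jet support closure of `(f)` in `k[[x_1, ..., x_n]]` equals `(f) + 𝔪^(m+1)`,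
for every `m`. -/
theorem jetSupportClosure_reduced_homogeneous (k : Type) [Field k] [IsAlgClosed k]
    [CharZero k] (n d : ℕ) (f : MvPolynomial (Fin n) k) (hf : f.IsHomogeneous d)
    (hred : Squarefree f) (m : ℕ) :
    jetSupportClosure k (mIdeal k n) m (Ideal.span {(f : MvPowerSeries (Fin n) k)}) =
      Ideal.span {(f : MvPowerSeries (Fin n) k)} ⊔ (mIdeal k n) ^ (m + 1) :=
  jetSupportClosure_reduced_homogeneous_general k n d f hf hred m
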